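/- arXiv:2402.07115 — 5 statements merged into one kernel-verified Lean document; each statement's English description precedes it below -/
import Mathlib

section
/- For every integer m ≥ 1, one has |c_{2m}| ≤ (π/2) · (1/(4√6)) · |c_{2m−1}|; in particular |c_{2m}| < |c_{2m−1}|. -/
/-!
Write `c n = (-1)^n (4√6)^(-n) Σₖ aₙₖ x^(n-2k)` with `x = π/6` and all terms positive.
Since `aₙ₊₁,ₖ / aₙₖ = (n+2) / ((n+1-k)(n+2-2k)) ≤ 3` and, for odd `n`, both sums run over the
same `k`, the sum for `n + 1` is at most `3x = π/2` times the sum for `n`. Dividing by the extra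
factor `4√6 > π/2` gives both claims.
-/

open Real Finset Filter Topology

noncomputable def c (m : ℕ) : ℝ :=
  ((-1 : ℝ) ^ m / (4 * Real.sqrt 6) ^ m) *
    ∑ k ∈ Finset.range ((m + 1) / 2 + 1),
      ((m + 1).choose k : ℝ) * ((m + 1 - k : ℕ) : ℝ) / ((m + 1 - 2 * k).factorial : ℝ) *
        (π / 6) ^ ((m : ℤ) - 2 * k)

noncomputable def cCoeff (n k : ℕ) : ℝ :=
  ((n + 1).choose k : ℝ) * ((n + 1 - k : ℕ) : ℝ) / ((n + 1 - 2 * k).factorial : ℝ)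

noncomputable def cSum (x : ℝ) (n : ℕ) : ℝ :=
  ∑ k ∈ range ((n + 1) / 2 + 1), cCoeff n k * x ^ ((n : ℤ) - 2 * k)

lemma c_eq_cSum (n : ℕ) : c n = (-1 : ℝ) ^ n / (4 * √6) ^ n * cSum (π / 6) n := rfl

lemma cCoeff_pos {n k : ℕ} (hk : 2 * k ≤ n + 1) : 0 < cCoeff n k := by
  have : 0 < (n + 1).choose k := Nat.choose_pos (by omega)
  have : 0 < n + 1 - k := by omega
  unfold cCoeff
  positivity

lemma cSum_pos {x : ℝ} (hx : 0 < x) (n : ℕ) : 0 < cSum x n :=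
  sum_pos (fun k hk => mul_pos (cCoeff_pos (by rw [mem_range] at hk; omega)) (zpow_pos hx _))
    ⟨0, by simp⟩

lemma abs_c (n : ℕ) : |c n| = cSum (π / 6) n / (4 * √6) ^ n := by
  rw [c_eq_cSum, abs_mul, abs_div, abs_pow, abs_pow, abs_neg, abs_one, one_pow,
    abs_of_pos (by positivity), abs_of_pos (cSum_pos (by positivity) n), one_div_mul_eq_div]

lemma succ_le_three_mul {n k : ℕ} (hn : 1 ≤ n) (hk : 2 * k ≤ n + 1) :
    n + 2 ≤ 3 * ((n + 1 - k) * (n + 2 - 2 * k)) := by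
  obtain ⟨a, ha⟩ : ∃ a, n + 1 = 2 * k + a := ⟨n + 1 - 2 * k, by omega⟩
  rw [show n + 1 - k = k + a by omega, show n + 2 - 2 * k = a + 1 by omega]
  rcases a with _ | a
  · omega
  · nlinarith

lemma cCoeff_succ_le {n k : ℕ} (hn : 1 ≤ n) (hk : 2 * k ≤ n + 1) :
    cCoeff (n + 1) k ≤ 3 * cCoeff n k := by
  have hfact : (n + 2 - 2 * k).factorial = (n + 2 - 2 * k) * (n + 1 - 2 * k).factorial := by
    rw [show n + 2 - 2 * k = n + 1 - 2 * k + 1 by omega, Nat.factorial_succ]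
  have hnat : (n + 2).choose k * (n + 2 - k) * (n + 1 - 2 * k).factorial ≤
      3 * ((n + 1).choose k * (n + 1 - k)) * (n + 2 - 2 * k).factorial := by
    rw [← Nat.choose_mul_succ_eq, hfact]
    calc (n + 1).choose k * (n + 2) * (n + 1 - 2 * k).factorial
        ≤ (n + 1).choose k * (3 * ((n + 1 - k) * (n + 2 - 2 * k))) *
            (n + 1 - 2 * k).factorial := by gcongr; exact succ_le_three_mul hn hk
      _ = _ := by ring
  unfold cCoeff
  rw [mul_div_assoc', div_le_div_iff₀ (by positivity) (by positivity)]
  exact_mod_cast hnat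

lemma cSum_succ_le {x : ℝ} (hx : 0 < x) {n : ℕ} (hn : Odd n) :
    cSum x (n + 1) ≤ 3 * x * cSum x n := by
  obtain ⟨m, rfl⟩ := hn
  have hrange : (2 * m + 1 + 1 + 1) / 2 + 1 = (2 * m + 1 + 1) / 2 + 1 := by omega
  rw [cSum, cSum, hrange, mul_sum]
  refine sum_le_sum fun k hmem => ?_
  have hk : 2 * k ≤ 2 * m + 1 + 1 := by rw [mem_range] at hmem; omega
  rw [show ((2 * m + 1 + 1 : ℕ) : ℤ) - 2 * k = ((2 * m + 1 : ℕ) : ℤ) - 2 * k + 1 by push_cast; ring,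
    zpow_add_one₀ hx.ne']
  calc cCoeff (2 * m + 1 + 1) k * (x ^ (((2 * m + 1 : ℕ) : ℤ) - 2 * k) * x)
      ≤ 3 * cCoeff (2 * m + 1) k * (x ^ (((2 * m + 1 : ℕ) : ℤ) - 2 * k) * x) := by
        gcongr; exact cCoeff_succ_le (by omega) hk
    _ = _ := by ring

lemma abs_c_succ_le {n : ℕ} (hn : Odd n) :
    |c (n + 1)| ≤ π / 2 * (1 / (4 * √6)) * |c n| := by
  rw [abs_c, abs_c, pow_succ]
  calc cSum (π / 6) (n + 1) / ((4 * √6) ^ n * (4 * √6))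
      ≤ 3 * (π / 6) * cSum (π / 6) n / ((4 * √6) ^ n * (4 * √6)) := by
        gcongr; exact cSum_succ_le (by positivity) hn
    _ = _ := by field_simp; ring

lemma pi_div_two_mul_one_div_four_mul_sqrt_six_lt_one : π / 2 * (1 / (4 * √6)) < 1 := by
  have h6 : (2 : ℝ) ≤ √6 := by
    rw [show (2 : ℝ) = √(2 ^ 2) by simp]; exact Real.sqrt_le_sqrt (by norm_num)
  rw [← div_eq_mul_one_div, div_div, div_lt_one (by positivity)]
  nlinarith [Real.pi_lt_four]

theorem stmt0 (m : ℕ) (hm : 1 ≤ m) :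
    |c (2 * m)| ≤ π / 2 * (1 / (4 * Real.sqrt 6)) * |c (2 * m - 1)| ∧
      |c (2 * m)| < |c (2 * m - 1)| := by
  have hodd : Odd (2 * m - 1) := ⟨m - 1, by omega⟩
  have hle : |c (2 * m)| ≤ π / 2 * (1 / (4 * √6)) * |c (2 * m - 1)| := by
    simpa [show 2 * m - 1 + 1 = 2 * m by omega] using abs_c_succ_le hodd
  refine ⟨hle, hle.trans_lt ?_⟩
  have hpos : 0 < |c (2 * m - 1)| := by
    rw [abs_c]; exact div_pos (cSum_pos (by positivity) _) (by positivity)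
  simpa using mul_lt_mul_of_pos_right pi_div_two_mul_one_div_four_mul_sqrt_six_lt_one hpos
end

section
/- For every nonnegative integer m, one has |c_{2m}| ≤ (6√2/π^{3/2}) · sinh(π/6) · (√(2m+1)/(√24)^{2m}) · √(1 + 1/(4m+1)). -/
open Real Finset Filter Topology

/-!
For even index, `(m + 1 - k) * C(m + 1, k) = (m + 1) * C(m, k)` turns `c (2 * m)` into
`(2m + 1) / 96 ^ m * ∑ₖ C(2m, k) (π/6)^(2(m-k)) / (2(m-k)+1)!`, a sum of nonnegative terms.
Bounding every `C(2m, k)` by the central binomial coefficient leaves a partial sum of the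
series of `sinh (π/6) / (π/6)`. The central binomial coefficient is at most
`2 * 4 ^ m / √(π (4m + 1))` by Wallis' product: `W n = 16 ^ n / ((2n + 1) C(2n, n)²)`, and
`(2n + 1) / (4n + 1) * W n` decreases to `π / 4`.
-/

namespace Real.Wallis

theorem W_eq_centralBinom (n : ℕ) :
    W n = 16 ^ n / ((2 * n + 1) * (n.centralBinom : ℝ) ^ 2) := by
  have hfac : ((2 * n).factorial : ℝ) = n.centralBinom * (n.factorial : ℝ) ^ 2 := by
    have := Nat.choose_mul_factorial_mul_factorial (show n ≤ 2 * n by omega)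
    rw [show 2 * n - n = n by omega, ← Nat.centralBinom_eq_two_mul_choose] at this
    rw [← this]; push_cast; ring
  rw [W_eq_factorial_ratio, hfac, show (2 : ℝ) ^ (4 * n) = 16 ^ n by rw [pow_mul]; norm_num]
  field_simp

theorem antitone_mul_W : Antitone fun n : ℕ => (2 * n + 1) / (4 * n + 1) * W n := by
  refine antitone_nat_of_succ_le fun n => ?_
  have key : (2 * ((n + 1 : ℕ) : ℝ) + 1) / (4 * ((n + 1 : ℕ) : ℝ) + 1) *
      ((2 * n + 2) / (2 * n + 1) * ((2 * n + 2) / (2 * n + 3))) ≤ (2 * n + 1) / (4 * n + 1) := by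
    push_cast
    rw [div_mul_div_comm, div_mul_div_comm, div_le_div_iff₀ (by positivity) (by positivity)]
    -- (4n + 5)(2n + 1)² = (4n + 1)(2n + 2)² + 1
    nlinarith
  rw [W_succ]
  linarith [mul_le_mul_of_nonneg_left key (W_pos n).le]

theorem pi_div_four_le_mul_W (n : ℕ) : π / 4 ≤ (2 * n + 1) / (4 * n + 1) * W n := by
  have hlim : Tendsto (fun n : ℕ => (2 * n + 1) / (4 * n + 1) * W n) atTop
      (𝓝 (1 / 2 * (π / 2))) := by
    refine Tendsto.mul ?_ tendsto_W_nhds_pi_div_two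
    have h : ∀ n : ℕ, (2 * (n : ℝ) + 1) / (4 * n + 1) = 1 / 2 + (1 / 2) / (4 * n + 1) := by
      intro n; field_simp; ring
    simp_rw [h]
    have hden : Tendsto (fun n : ℕ => 4 * (n : ℝ) + 1) atTop atTop :=
      (tendsto_natCast_atTop_atTop.const_mul_atTop four_pos).atTop_add tendsto_const_nhds
    simpa using tendsto_const_nhds.add (tendsto_const_nhds.div_atTop hden)
  have hle := antitone_mul_W.le_of_tendsto hlim n
  linarith

end Real.Wallis

theorem Nat.centralBinom_le_two_mul_four_pow_div_sqrt (n : ℕ) :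
    (n.centralBinom : ℝ) ≤ 2 * 4 ^ n / √(π * (4 * n + 1)) := by
  have hW := Real.Wallis.pi_div_four_le_mul_W n
  rw [Real.Wallis.W_eq_centralBinom] at hW
  have hC : (0 : ℝ) < n.centralBinom := by exact_mod_cast n.centralBinom_pos
  rw [le_div_iff₀ (by positivity)]
  refine le_of_pow_le_pow_left₀ two_ne_zero (by positivity) ?_
  rw [mul_pow, sq_sqrt (by positivity), mul_pow, ← pow_mul, show (4 : ℝ) ^ (n * 2) = 16 ^ n by
    rw [pow_mul']; norm_num]
  rw [show (2 * n + 1 : ℝ) / (4 * n + 1) * (16 ^ n / ((2 * n + 1) * n.centralBinom ^ 2))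
      = 16 ^ n / ((4 * n + 1) * n.centralBinom ^ 2) by field_simp,
    le_div_iff₀ (by positivity)] at hW
  linarith

theorem Real.mul_sum_range_pow_div_factorial_le_sinh {x : ℝ} (hx : 0 ≤ x) (n : ℕ) :
    x * ∑ j ∈ range n, x ^ (2 * j) / (2 * j + 1).factorial ≤ sinh x := by
  calc x * ∑ j ∈ range n, x ^ (2 * j) / (2 * j + 1).factorial
      = ∑ j ∈ range n, x ^ (2 * j + 1) / (2 * j + 1).factorial := by
        rw [mul_sum]
        exact sum_congr rfl fun j _ => by ring
    _ ≤ sinh x := sum_le_hasSum _ (fun j _ => by positivity) (hasSum_sinh x)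

theorem c_two_mul (m : ℕ) :
    c (2 * m) = (2 * m + 1) / 96 ^ m * ∑ k ∈ range (m + 1),
      ((2 * m).choose k : ℝ) * (π / 6) ^ (2 * (m - k)) / (2 * (m - k) + 1).factorial := by
  have hsign : (-1 : ℝ) ^ (2 * m) = 1 := by rw [pow_mul]; norm_num
  have hbase : (4 * √6 : ℝ) ^ (2 * m) = 96 ^ m := by
    rw [pow_mul, mul_pow, sq_sqrt (by norm_num)]; norm_num
  rw [c, hsign, hbase, show (2 * m + 1) / 2 + 1 = m + 1 by omega, div_mul_eq_mul_div, one_mul,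
    div_mul_eq_mul_div, mul_sum]
  congr 1
  refine sum_congr rfl fun k hk => ?_
  have hkm : k ≤ m := by rw [mem_range] at hk; omega
  rw [show 2 * m + 1 - 2 * k = 2 * (m - k) + 1 by omega,
    show ((2 * m : ℕ) : ℤ) - 2 * k = (2 * (m - k) : ℕ) by push_cast [Nat.cast_sub hkm]; ring,
    zpow_natCast, ← Nat.cast_mul, ← Nat.choose_mul_succ_eq]
  push_cast
  ring

theorem sum_choose_mul_pow_div_factorial_le {x : ℝ} (hx : 0 ≤ x) (m : ℕ) :
    x * ∑ k ∈ range (m + 1),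
        ((2 * m).choose k : ℝ) * x ^ (2 * (m - k)) / (2 * (m - k) + 1).factorial ≤
      m.centralBinom * sinh x := by
  calc _ ≤ x * ∑ k ∈ range (m + 1),
        (m.centralBinom : ℝ) * x ^ (2 * (m - k)) / (2 * (m - k) + 1).factorial := by
        gcongr
        exact_mod_cast Nat.choose_le_centralBinom _ _
    _ = m.centralBinom * (x * ∑ j ∈ range (m + 1), x ^ (2 * j) / (2 * j + 1).factorial) := by
        rw [← sum_range_reflect, mul_sum, mul_sum, mul_sum]
        refine sum_congr rfl fun j hj => ?_
        rw [mem_range] at hj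
        rw [show m + 1 - 1 - j = m - j by omega, Nat.sub_sub_self (by omega)]
        ring
    _ ≤ m.centralBinom * sinh x := by
        gcongr
        exact mul_sum_range_pow_div_factorial_le_sinh hx _

theorem stmt9_rhs_eq (m : ℕ) (s : ℝ) :
    (2 * m + 1 : ℝ) / 96 ^ m * (2 * 4 ^ m / √(π * (4 * m + 1)) * s / (π / 6)) =
      6 * √2 / π ^ ((3 : ℝ) / 2) * s * (√(2 * m + 1) / √24 ^ (2 * m)) *
        √(1 + 1 / (4 * m + 1)) := by
  have h32 : π ^ ((3 : ℝ) / 2) = π * √π := by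
    rw [show (3 : ℝ) / 2 = 1 + 1 / 2 by norm_num, rpow_add pi_pos, rpow_one, sqrt_eq_rpow]
  have h24 : √24 ^ (2 * m) = (24 : ℝ) ^ m := by rw [pow_mul, sq_sqrt (by norm_num)]
  have h96 : (96 : ℝ) ^ m = 4 ^ m * 24 ^ m := by rw [← mul_pow]; norm_num
  have hfrac : (1 + 1 / (4 * m + 1) : ℝ) = 2 * (2 * m + 1) / (4 * m + 1) := by field_simp; ring
  rw [h32, h24, h96, hfrac, sqrt_div' _ (by positivity), sqrt_mul pi_pos.le, sqrt_mul zero_le_two]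
  field_simp
  rw [sq_sqrt zero_le_two, sq_sqrt (by positivity)]
  ring

theorem stmt9 (m : ℕ) :
    |c (2 * m)| ≤ 6 * Real.sqrt 2 / π ^ ((3 : ℝ) / 2) * Real.sinh (π / 6) *
      (Real.sqrt (2 * m + 1) / Real.sqrt 24 ^ (2 * m)) *
        Real.sqrt (1 + 1 / (4 * m + 1)) := by
  have hx : (0 : ℝ) < π / 6 := by positivity
  have hsum := sum_choose_mul_pow_div_factorial_le hx.le m
  rw [c_two_mul, abs_of_nonneg (by positivity), ← stmt9_rhs_eq]
  gcongr
  rw [le_div_iff₀' hx]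
  refine hsum.trans ?_
  gcongr
  exact Nat.centralBinom_le_two_mul_four_pow_div_sqrt m
end

section
/- For every nonnegative integer m, one has |c_{2m+1}| ≤ (6√2/π^{3/2}) · cosh(π/6) · (√(2m+2)/(√24)^{2m+1}) · √(1 − 1/(4m+5)). -/
open Real Finset Filter Topology

/-!
The sum defining `c (2 * m + 1)` has nonnegative terms, and
`C(2m+2, k) (2m+2-k) = (2m+2) C(2m+1, k) ≤ (2m+2) C(2m+1, m)`, so after pulling out one
factor `6 / π` the rest is a partial sum of the cosh series at `π / 6`. The middle binomial
coefficient is bounded by Wallis' product: `W n * (4n+2)/(4n+1)` decreases to `π / 2`, which gives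
`π (4n+1) C(2n, n)² ≤ 4 · 16ⁿ`, and `C(2m+2, m+1) = 2 C(2m+1, m)` turns this into the factor
`√(π (4m+5))` of the bound.
-/

open scoped Nat

namespace Real.Wallis

theorem antitone_W_mul : Antitone fun n : ℕ ↦ W n * ((4 * n + 2) / (4 * n + 1)) := by
  refine antitone_nat_of_succ_le fun n ↦ ?_
  simp only [W_succ, Nat.cast_succ, mul_assoc]
  refine mul_le_mul_of_nonneg_left ?_ (W_pos n).le
  rw [div_mul_div_comm, div_mul_div_comm, div_le_div_iff₀ (by positivity) (by positivity)]
  nlinarith [(n.cast_nonneg : (0 : ℝ) ≤ n)]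

theorem pi_div_two_le_W_mul (n : ℕ) : π / 2 ≤ W n * ((4 * n + 2) / (4 * n + 1)) := by
  have hratio : Tendsto (fun k : ℕ ↦ ((4 * k + 2) / (4 * k + 1) : ℝ)) atTop (𝓝 1) := by
    simpa [add_comm] using tendsto_add_mul_div_add_mul_atTop_nhds (2 : ℝ) 1 4 four_ne_zero
  exact antitone_W_mul.le_of_tendsto (by simpa using tendsto_W_nhds_pi_div_two.mul hratio) n

theorem W_mul_centralBinom_sq (n : ℕ) :
    W n * ((n.centralBinom : ℝ) ^ 2 * (2 * n + 1)) = 16 ^ n := by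
  have hfac : ((2 * n)! : ℝ) = n.centralBinom * n ! * n ! := by
    rw [Nat.centralBinom_eq_two_mul_choose]
    exact_mod_cast (Nat.choose_mul_factorial_mul_factorial (by omega : n ≤ 2 * n)).symm.trans
      (by rw [show 2 * n - n = n by omega])
  have hC : (n.centralBinom : ℝ) ≠ 0 := Nat.cast_ne_zero.mpr n.centralBinom_ne_zero
  rw [W_eq_factorial_ratio, hfac, show (16 : ℝ) ^ n = 2 ^ (4 * n) by rw [pow_mul]; norm_num]
  field_simp

end Real.Wallis

namespace Nat

theorem pi_mul_centralBinom_sq_le (n : ℕ) :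
    π * (4 * n + 1) * (n.centralBinom : ℝ) ^ 2 ≤ 4 * 16 ^ n := by
  have hW := Real.Wallis.pi_div_two_le_W_mul n
  rw [← Real.Wallis.W_mul_centralBinom_sq n]
  rw [mul_div_assoc', le_div_iff₀ (by positivity)] at hW
  have hC : 0 ≤ (n.centralBinom : ℝ) ^ 2 := by positivity
  nlinarith [mul_le_mul_of_nonneg_right hW hC]

theorem choose_middle_le_four_pow_div_sqrt (n : ℕ) :
    ((2 * n + 1).choose n : ℝ) ≤ 4 ^ (n + 1) / √(π * (4 * n + 5)) := by
  have hcb : (n + 1).centralBinom = 2 * (2 * n + 1).choose n := by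
    rw [centralBinom_eq_two_mul_choose, show 2 * (n + 1) = 2 * n + 1 + 1 by ring,
      choose_succ_succ, choose_symm_half]
    ring
  have hsq := pi_mul_centralBinom_sq_le (n + 1)
  rw [hcb] at hsq
  push_cast at hsq
  rw [le_div_iff₀ (by positivity),
    ← Real.sqrt_sq (by positivity : (0 : ℝ) ≤ (2 * n + 1).choose n),
    ← Real.sqrt_mul (by positivity), Real.sqrt_le_left (by positivity)]
  have h16 : ((4 : ℝ) ^ (n + 1)) ^ 2 = 16 ^ (n + 1) := by
    rw [← pow_mul, mul_comm, pow_mul]; norm_num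
  rw [h16]
  linarith

end Nat

theorem Real.sum_range_pow_two_mul_div_factorial_le_cosh (x : ℝ) (n : ℕ) :
    ∑ i ∈ range n, x ^ (2 * i) / (2 * i)! ≤ cosh x :=
  sum_le_hasSum _ (fun i _ ↦ div_nonneg ((even_two_mul i).pow_nonneg x) (by positivity))
    (hasSum_cosh x)

theorem choose_mul_div_factorial_mul_zpow_le {x : ℝ} (hx : 0 < x) {m k : ℕ} (hk : k ≤ m + 1) :
    ((2 * m + 2).choose k : ℝ) * ((2 * m + 2 - k : ℕ) : ℝ) / ((2 * m + 2 - 2 * k)! : ℝ) *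
        x ^ (((2 * m + 1 : ℕ) : ℤ) - 2 * k)
      ≤ (2 * m + 2) * (2 * m + 1).choose m / x *
          (x ^ (2 * (m + 1 - k)) / (2 * (m + 1 - k))!) := by
  have hchoose : ((2 * m + 2).choose k : ℝ) * ((2 * m + 2 - k : ℕ) : ℝ)
      = (2 * m + 1).choose k * (2 * m + 2) := by
    exact_mod_cast (Nat.choose_mul_succ_eq (2 * m + 1) k).symm
  have hmiddle : ((2 * m + 1).choose k : ℝ) ≤ (2 * m + 1).choose m := by
    have := Nat.choose_le_middle k (2 * m + 1)
    rw [show (2 * m + 1) / 2 = m by omega] at this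
    exact_mod_cast this
  have hzpow : x ^ (((2 * m + 1 : ℕ) : ℤ) - 2 * k) = x ^ (2 * (m + 1 - k)) / x := by
    rw [show ((2 * m + 1 : ℕ) : ℤ) - 2 * k = ((2 * (m + 1 - k) : ℕ) : ℤ) - 1 by omega,
      zpow_sub_one₀ hx.ne', zpow_natCast, div_eq_mul_inv]
  rw [hchoose, hzpow, show 2 * m + 2 - 2 * k = 2 * (m + 1 - k) by omega]
  calc _ = (2 * m + 1).choose k *
          ((2 * m + 2) / x * (x ^ (2 * (m + 1 - k)) / (2 * (m + 1 - k))!)) := by ring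
    _ ≤ (2 * m + 1).choose m *
          ((2 * m + 2) / x * (x ^ (2 * (m + 1 - k)) / (2 * (m + 1 - k))!)) := by gcongr
    _ = _ := by ring

theorem sum_choose_mul_div_factorial_mul_zpow_le {x : ℝ} (hx : 0 < x) (m : ℕ) :
    ∑ k ∈ range (m + 2), ((2 * m + 2).choose k : ℝ) * ((2 * m + 2 - k : ℕ) : ℝ) /
        ((2 * m + 2 - 2 * k)! : ℝ) * x ^ (((2 * m + 1 : ℕ) : ℤ) - 2 * k)
      ≤ (2 * m + 2) * (2 * m + 1).choose m / x * cosh x := by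
  refine (sum_le_sum fun k hk ↦ choose_mul_div_factorial_mul_zpow_le hx
    (Nat.lt_succ_iff.mp (mem_range.mp hk))).trans ?_
  rw [← mul_sum]
  gcongr
  have := sum_range_reflect (fun i ↦ x ^ (2 * i) / ((2 * i)! : ℝ)) (m + 2)
  simp only [show m + 2 - 1 = m + 1 from rfl] at this
  rw [this]
  exact Real.sum_range_pow_two_mul_div_factorial_le_cosh x (m + 2)

theorem abs_c_odd_le (m : ℕ) :
    |c (2 * m + 1)| ≤ (2 * m + 2) * (2 * m + 1).choose m / (π / 6) * cosh (π / 6) /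
      (4 * √6) ^ (2 * m + 1) := by
  rw [c, show (2 * m + 1 + 1) / 2 + 1 = m + 2 by omega, abs_mul, abs_div, abs_pow, abs_neg,
    abs_one, one_pow, abs_of_pos (by positivity : (0 : ℝ) < (4 * √6) ^ (2 * m + 1)),
    abs_of_nonneg (sum_nonneg fun k _ ↦ by positivity), one_div_mul_eq_div]
  gcongr
  exact sum_choose_mul_div_factorial_mul_zpow_le (by positivity) m

theorem stmt10 (m : ℕ) :
    |c (2 * m + 1)| ≤ 6 * Real.sqrt 2 / π ^ ((3 : ℝ) / 2) * Real.cosh (π / 6) *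
      (Real.sqrt (2 * m + 2) / Real.sqrt 24 ^ (2 * m + 1)) *
        Real.sqrt (1 - 1 / (4 * m + 5)) := by
  have h24 : √24 = 2 * √6 := by
    rw [show (24 : ℝ) = 2 ^ 2 * 6 by norm_num, Real.sqrt_mul (by norm_num),
      Real.sqrt_sq two_pos.le]
  have hpi : π ^ ((3 : ℝ) / 2) = π * √π := by
    rw [show (3 : ℝ) / 2 = 1 + 1 / 2 by norm_num, Real.rpow_add pi_pos, Real.rpow_one,
      Real.sqrt_eq_rpow]
  have hroot : √(1 - 1 / (4 * m + 5) : ℝ) = √2 * √(2 * m + 2) / √(4 * m + 5) := by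
    rw [← Real.sqrt_mul two_pos.le, ← Real.sqrt_div' _ (by positivity)]
    congr 1
    field_simp
    ring
  calc |c (2 * m + 1)|
      ≤ (2 * m + 2) * (2 * m + 1).choose m / (π / 6) * cosh (π / 6) /
          (4 * √6) ^ (2 * m + 1) := abs_c_odd_le m
    _ ≤ (2 * m + 2) * (4 ^ (m + 1) / √(π * (4 * m + 5))) / (π / 6) * cosh (π / 6) /
          (4 * √6) ^ (2 * m + 1) := by
        gcongr
        exact Nat.choose_middle_le_four_pow_div_sqrt m
    _ = _ := by
        rw [h24, hpi, hroot, Real.sqrt_mul pi_pos.le, mul_pow, mul_pow,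
          show (4 : ℝ) ^ (2 * m + 1) = 2 ^ (2 * m + 1) * 2 ^ (2 * m + 1) by
            rw [← mul_pow]; norm_num,
          show (4 : ℝ) ^ (m + 1) = 2 * 2 ^ (2 * m + 1) by
            rw [show (4 : ℝ) = 2 ^ 2 by norm_num, ← pow_mul, ← pow_succ']; ring_nf]
        field_simp
        rw [Real.sq_sqrt two_pos.le, Real.sq_sqrt (by positivity)]
        ring
end

section
/- As N → +∞, the even-indexed coefficients satisfy the asymptotic equivalence c_{2N} ~ (6√2/π^{3/2}) · sinh(π/6) · √(2N+1)/(√24)^{2N}; that is, the quotient c_{2N} · (√24)^{2N} / ((6√2/π^{3/2}) · sinh(π/6) · √(2N+1)) tends to 1. -/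
open Real Finset Filter Topology

/-!
Reflecting the summation index and using `(2N+1) C(2N,k) = C(2N+1,k) (2N+1-k)` turns the defining
sum into `c_{2N} 24^N = (2N+1)/4^N · ∑_{j ≤ N} C(2N,N-j) (π/6)^{2j}/(2j+1)!`. Divided by the central
binomial coefficient `C(2N,N)`, the `j`-th weight lies in `[0,1]` and tends to `1`, so by Tannery's
theorem the sum tends to `∑ (π/6)^{2j}/(2j+1)! = sinh(π/6)/(π/6)`, while Stirling's formula gives
`C(2N,N) ~ 4^N/√(πN)`.
-/

open Nat in
theorem centralBinom_mul_sqrt_div_four_pow {n : ℕ} (hn : n ≠ 0) :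
    (centralBinom n : ℝ) * √n / 4 ^ n =
      Stirling.stirlingSeq (2 * n) / Stirling.stirlingSeq n ^ 2 := by
  have hfact : ((2 * n)! : ℝ) = centralBinom n * n ! * n ! := by
    rw [centralBinom, ← choose_mul_factorial_mul_factorial (by omega : n ≤ 2 * n),
      show 2 * n - n = n by omega]
    push_cast; ring
  have hsqrt : √(2 * ((2 * n : ℕ) : ℝ)) = 2 * √n := by
    rw [show 2 * ((2 * n : ℕ) : ℝ) = 2 ^ 2 * n by push_cast; ring, sqrt_mul (by positivity),
      sqrt_sq zero_le_two]
  have hpow : (((2 * n : ℕ) : ℝ) / exp 1) ^ (2 * n) = 4 ^ n * ((n / exp 1) ^ n) ^ 2 := by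
    rw [show ((2 * n : ℕ) : ℝ) / exp 1 = 2 * (n / exp 1) by push_cast; ring, mul_pow, pow_mul,
      ← pow_mul _ n 2, mul_comm n 2]
    norm_num
  unfold Stirling.stirlingSeq
  rw [hfact, hsqrt, hpow, sqrt_mul zero_le_two]
  field_simp
  rw [sq_sqrt zero_le_two]

theorem tendsto_centralBinom_mul_sqrt_div_four_pow :
    Tendsto (fun n : ℕ => (n.centralBinom : ℝ) * √n / 4 ^ n) atTop (𝓝 (1 / √π)) := by
  have hlim : Tendsto (fun n : ℕ => Stirling.stirlingSeq (2 * n) / Stirling.stirlingSeq n ^ 2)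
      atTop (𝓝 (√π / √π ^ 2)) :=
    (Stirling.tendsto_stirlingSeq_sqrt_pi.comp (tendsto_id.const_mul_atTop' two_pos)).div
      (Stirling.tendsto_stirlingSeq_sqrt_pi.pow 2) (by positivity)
  rw [sq, div_mul_cancel_left₀ (by positivity), ← one_div] at hlim
  refine hlim.congr' ?_
  filter_upwards [eventually_ne_atTop 0] with n hn
  exact (centralBinom_mul_sqrt_div_four_pow hn).symm

theorem tendsto_choose_sub_div_centralBinom (j : ℕ) :
    Tendsto (fun n : ℕ => ((2 * n).choose (n - j) : ℝ) / n.centralBinom) atTop (𝓝 1) := by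
  induction j with
  | zero =>
    refine tendsto_const_nhds.congr fun n => ?_
    rw [Nat.sub_zero, ← Nat.centralBinom, div_self (by exact_mod_cast n.centralBinom_ne_zero)]
  | succ j ih =>
    have hfrac : Tendsto (fun n : ℕ => ((n : ℝ) - j) / (n + (j + 1))) atTop (𝓝 1) := by
      have h := tendsto_add_mul_div_add_mul_atTop_nhds (-(j : ℝ)) (j + 1) 1 one_ne_zero
      rw [div_one] at h
      exact h.congr fun n => by ring
    refine (by simpa using ih.mul hfrac : Tendsto _ _ _).congr' ?_
    filter_upwards [eventually_ge_atTop (j + 1)] with n hn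
    have hstep : ((2 * n).choose (n - (j + 1)) : ℝ) * (n + (j + 1)) =
        (2 * n).choose (n - j) * (n - j) := by
      have h := Nat.choose_succ_right_eq (2 * n) (n - (j + 1))
      rw [show n - (j + 1) + 1 = n - j by omega,
        show 2 * n - (n - (j + 1)) = n + j + 1 by omega] at h
      have h' : (((2 * n).choose (n - j) * (n - j) : ℕ) : ℝ) =
          ((2 * n).choose (n - (j + 1)) * (n + j + 1) : ℕ) := by
        rw [h]
      push_cast [Nat.cast_sub (by omega : j ≤ n)] at h'
      linarith
    have hB : (n.centralBinom : ℝ) ≠ 0 := by exact_mod_cast n.centralBinom_ne_zero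
    rw [div_mul_div_comm, ← hstep]
    field_simp

theorem tendsto_sum_range_smul_of_tendsto_one {E : Type*} [NormedAddCommGroup E]
    [NormedSpace ℝ E] [CompleteSpace E] {w : ℕ → ℕ → ℝ} {a : ℕ → E}
    (ha : Summable fun j => ‖a j‖) (hw : ∀ j, Tendsto (w · j) atTop (𝓝 1))
    (hw_le : ∀ n j, j ≤ n → ‖w n j‖ ≤ 1) :
    Tendsto (fun n => ∑ j ∈ range (n + 1), w n j • a j) atTop (𝓝 (∑' j, a j)) := by
  have hlim := tendsto_tsum_of_dominated_convergence (𝓕 := atTop) ha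
    (f := fun n j => (range (n + 1) : Set ℕ).indicator (fun j => w n j • a j) j) (g := a)
    (fun j => ?_) (Eventually.of_forall fun n j => ?_)
  · exact hlim.congr fun n => (sum_eq_tsum_indicator _ _).symm
  · refine (by simpa using (hw j).smul_const (a j) : Tendsto _ _ _).congr' ?_
    filter_upwards [eventually_ge_atTop j] with n hn
    rw [Set.indicator_of_mem (by simp; omega)]
  · by_cases hj : j ≤ n
    · rw [Set.indicator_of_mem (by simp; omega), norm_smul]
      exact mul_le_of_le_one_left (norm_nonneg _) (hw_le n j hj)
    · rw [Set.indicator_of_notMem (by simp; omega), norm_zero]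
      exact norm_nonneg _

theorem hasSum_pow_two_mul_div_factorial_sinh_div {x : ℝ} (hx : x ≠ 0) :
    HasSum (fun n => x ^ (2 * n) / (2 * n + 1).factorial) (sinh x / x) := by
  refine ((hasSum_sinh x).div_const x).congr_fun fun n => ?_
  rw [pow_succ]
  field_simp

theorem tendsto_sum_choose_div_centralBinom_mul {x : ℝ} (hx : x ≠ 0) :
    Tendsto (fun n : ℕ => ∑ j ∈ range (n + 1),
        ((2 * n).choose (n - j) : ℝ) / n.centralBinom * (x ^ (2 * j) / (2 * j + 1).factorial))
      atTop (𝓝 (sinh x / x)) := by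
  have hs := hasSum_pow_two_mul_div_factorial_sinh_div hx
  rw [← hs.tsum_eq]
  refine tendsto_sum_range_smul_of_tendsto_one hs.summable.abs
    tendsto_choose_sub_div_centralBinom fun n j _ => ?_
  have hB : (0 : ℝ) < n.centralBinom := by exact_mod_cast n.centralBinom_pos
  rw [Real.norm_eq_abs, abs_of_nonneg (by positivity), div_le_one hB]
  exact_mod_cast Nat.choose_le_centralBinom _ _

theorem c_two_mul_mul_sqrt_24_pow (n : ℕ) :
    c (2 * n) * √24 ^ (2 * n) = (2 * n + 1) / 4 ^ n *
      ∑ j ∈ range (n + 1),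
        ((2 * n).choose (n - j) : ℝ) * ((π / 6) ^ (2 * j) / (2 * j + 1).factorial) := by
  have hterm : ∀ k ∈ range (n + 1),
      ((2 * n + 1).choose k : ℝ) * ((2 * n + 1 - k : ℕ) : ℝ) /
          ((2 * n + 1 - 2 * k).factorial : ℝ) * (π / 6) ^ (((2 * n : ℕ) : ℤ) - 2 * k) =
      (2 * n + 1) * (((2 * n).choose k : ℝ) *
        ((π / 6) ^ (2 * (n - k)) / (2 * (n - k) + 1).factorial)) := by
    intro k hk
    have hkn : k ≤ n := Nat.lt_succ_iff.mp (mem_range.mp hk)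
    have hchoose : ((2 * n).choose k : ℝ) * (2 * n + 1) =
        (2 * n + 1).choose k * (2 * n + 1 - k : ℕ) := by
      exact_mod_cast Nat.choose_mul_succ_eq (2 * n) k
    rw [show ((2 * n : ℕ) : ℤ) - 2 * k = ((2 * (n - k) : ℕ) : ℤ) by
        push_cast [Nat.cast_sub hkn]; ring,
      zpow_natCast, show 2 * n + 1 - 2 * k = 2 * (n - k) + 1 by omega, ← hchoose]
    ring
  have hreflect : ∑ k ∈ range (n + 1), ((2 * n).choose k : ℝ) *
        ((π / 6) ^ (2 * (n - k)) / (2 * (n - k) + 1).factorial) =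
      ∑ j ∈ range (n + 1),
        ((2 * n).choose (n - j) : ℝ) * ((π / 6) ^ (2 * j) / (2 * j + 1).factorial) := by
    rw [← sum_range_reflect]
    refine sum_congr rfl fun j hj => ?_
    rw [show n + 1 - 1 - j = n - j by omega, Nat.sub_sub_self (by simpa [Nat.lt_succ_iff] using hj)]
  unfold c
  rw [show (2 * n + 1) / 2 + 1 = n + 1 by omega, sum_congr rfl hterm, ← mul_sum, hreflect,
    pow_mul, pow_mul, pow_mul, mul_pow, sq_sqrt (by norm_num), sq_sqrt (by norm_num)]
  have h96 : (4 ^ 2 * 6 : ℝ) ^ n = 24 ^ n * 4 ^ n := by rw [← mul_pow]; norm_num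
  rw [h96]
  field_simp
  norm_num

theorem stmt16 :
    Tendsto (fun N : ℕ => c (2 * N) * Real.sqrt 24 ^ (2 * N) /
        (6 * Real.sqrt 2 / π ^ ((3 : ℝ) / 2) * Real.sinh (π / 6) * Real.sqrt (2 * N + 1)))
      atTop (𝓝 1) := by
  have hconst : 6 * √2 / π ^ ((3 : ℝ) / 2) * sinh (π / 6) =
      1 / √π * (sinh (π / 6) / (π / 6)) * √2 := by
    rw [show (3 : ℝ) / 2 = 1 + 1 / 2 by norm_num, rpow_add pi_pos, rpow_one, ← sqrt_eq_rpow]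
    field_simp
  have hsinh : 0 < sinh (π / 6) := sinh_pos_iff.mpr (by positivity)
  have hsqrt : Tendsto (fun N : ℕ => √(2 + 1 / (N : ℝ))) atTop (𝓝 (√2)) := by
    simpa using ((tendsto_const_nhds (x := (2 : ℝ))).add
      tendsto_one_div_atTop_nhds_zero_nat).sqrt
  have hlim := ((tendsto_centralBinom_mul_sqrt_div_four_pow.mul
    (tendsto_sum_choose_div_centralBinom_mul (by positivity : π / 6 ≠ 0))).mul hsqrt).div_const
    (1 / √π * (sinh (π / 6) / (π / 6)) * √2)
  rw [div_self (by positivity), ← hconst] at hlim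
  refine hlim.congr' ?_
  filter_upwards [eventually_ne_atTop 0] with N hN
  have hB : (N.centralBinom : ℝ) ≠ 0 := by exact_mod_cast N.centralBinom_ne_zero
  have hN : (0 : ℝ) < N := by positivity
  have hsplit : √(2 * (N : ℝ) + 1) = √N * √(2 + 1 / N) := by
    rw [← sqrt_mul hN.le]
    field_simp
  simp_rw [c_two_mul_mul_sqrt_24_pow, hsplit, div_mul_eq_mul_div _ (N.centralBinom : ℝ),
    ← sum_div]
  field_simp
  rw [sq_sqrt hN.le, sq_sqrt (by positivity)]
  field_simp
end

section
/- For every nonnegative integer m, the scaled coefficient c̃_{2m} = (4√6)^{2m} · c_{2m} satisfies the lower bound c̃_{2m} ≥ (6/π) · (2m+1) · binom(2m, m) · (1 − (π²/72)·(1/(2m+2))) · Σ_{k=0}^{m} (1/(2k+1)!) · (π/6)^{2k+1}. -/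
/-!
After the substitution `k ↦ m - k`, the scaled coefficient `(4√6)^(2m) c(2m)` becomes
`∑ₖ w(m,k) x^(2k)/(2k+1)!` with `x = π/6` and `w(m,k) = C(2m+1, m-k) (m+1+k)`.
The weights satisfy `w(m,k+1) = w(m,k) (m-k)/(m+1+k)`, so they decrease from
`w(m,0) = (2m+1) C(2m,m)` and each step loses at most `(2k+1)/(m+1)` of `w(m,0)`;
hence `w(m,k) ≥ (1 - k²/(m+1)) w(m,0)`.
The loss `∑ₖ k² x^(2k)/(2k+1)!` is at most `x²/4` times the full sum, since
`(k+1)² x^(2k+2)/(2k+3)! ≤ (x²/4) x^(2k)/(2k+1)!`.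
-/

open Real Finset Filter Topology

namespace CoeffLowerBound

open Nat

def weight (m k : ℕ) : ℕ := (2 * m + 1).choose (m - k) * (m + 1 + k)

theorem weight_zero (m : ℕ) : weight m 0 = (2 * m + 1) * (2 * m).choose m := by
  rw [weight, Nat.sub_zero, Nat.add_zero, ← Nat.choose_symm_half, Nat.add_one_mul_choose_eq]

theorem weight_succ_mul {m k : ℕ} (h : k < m) :
    weight m (k + 1) * (m + 1 + k) = weight m k * (m - k) := by
  have hchoose := Nat.choose_succ_right_eq (2 * m + 1) (m - (k + 1))
  rw [show m - (k + 1) + 1 = m - k by omega,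
    show 2 * m + 1 - (m - (k + 1)) = m + 1 + (k + 1) by omega] at hchoose
  rw [weight, weight, ← hchoose]
  ring

theorem weight_succ_le {m k : ℕ} (h : k < m) : weight m (k + 1) ≤ weight m k := by
  refine Nat.le_of_mul_le_mul_right ?_ (by omega : 0 < m + 1 + k)
  rw [weight_succ_mul h]
  exact Nat.mul_le_mul_left _ (by omega)

theorem weight_le_weight_zero {m k : ℕ} (h : k ≤ m) : weight m k ≤ weight m 0 := by
  induction k with
  | zero => rfl
  | succ k ih => exact (weight_succ_le (by omega)).trans (ih (by omega))

theorem weight_succ_ge {m k : ℕ} (h : k < m) :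
    (weight m k : ℝ) - (2 * k + 1) / (m + 1) * weight m 0 ≤ weight m (k + 1) := by
  have hrec : (weight m (k + 1) : ℝ) * (m + 1 + k) = weight m k * (m - k) := by
    have := congrArg (Nat.cast : ℕ → ℝ) (weight_succ_mul h)
    push_cast [Nat.cast_sub h.le] at this
    exact this
  have hdrop :
      ((weight m k : ℝ) - weight m (k + 1)) * (m + 1 + k) = (2 * k + 1) * weight m k := by
    linear_combination -hrec
  have hdrop_nonneg : 0 ≤ (weight m k : ℝ) - weight m (k + 1) :=
    sub_nonneg.mpr (by exact_mod_cast weight_succ_le h)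
  have hle : (weight m k : ℝ) ≤ weight m 0 := by exact_mod_cast weight_le_weight_zero h.le
  rw [sub_le_iff_le_add, div_mul_eq_mul_div, ← sub_le_iff_le_add', le_div_iff₀ (by positivity)]
  calc ((weight m k : ℝ) - weight m (k + 1)) * (m + 1)
      ≤ ((weight m k : ℝ) - weight m (k + 1)) * (m + 1 + k) :=
        mul_le_mul_of_nonneg_left (le_add_of_nonneg_right k.cast_nonneg) hdrop_nonneg
    _ = (2 * k + 1) * weight m k := hdrop
    _ ≤ (2 * k + 1) * weight m 0 := by gcongr

theorem weight_ge {m k : ℕ} (h : k ≤ m) :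
    (1 - (k : ℝ) ^ 2 / (m + 1)) * weight m 0 ≤ weight m k := by
  induction k with
  | zero => simp
  | succ k ih =>
    calc (1 - ((k + 1 : ℕ) : ℝ) ^ 2 / (m + 1)) * weight m 0
        = (1 - (k : ℝ) ^ 2 / (m + 1)) * weight m 0 - (2 * k + 1) / (m + 1) * weight m 0 := by
          push_cast; ring
      _ ≤ (weight m k : ℝ) - (2 * k + 1) / (m + 1) * weight m 0 := by
          gcongr; exact ih (by omega)
      _ ≤ weight m (k + 1) := weight_succ_ge (by omega)

noncomputable def sinhcTerm (x : ℝ) (k : ℕ) : ℝ := x ^ (2 * k) / ((2 * k + 1)! : ℝ)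

theorem sinhcTerm_nonneg (x : ℝ) (k : ℕ) : 0 ≤ sinhcTerm x k :=
  div_nonneg ((even_two_mul k).pow_nonneg x) (Nat.cast_nonneg _)

theorem sinhcTerm_succ (x : ℝ) (k : ℕ) :
    sinhcTerm x (k + 1) = x ^ 2 / ((2 * k + 2) * (2 * k + 3)) * sinhcTerm x k := by
  rw [sinhcTerm, sinhcTerm, show 2 * (k + 1) + 1 = 2 * k + 1 + 1 + 1 by ring,
    Nat.factorial_succ, Nat.factorial_succ]
  push_cast
  field_simp
  ring

theorem sq_mul_sinhcTerm_succ_le (x : ℝ) (k : ℕ) :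
    ((k : ℝ) + 1) ^ 2 * sinhcTerm x (k + 1) ≤ x ^ 2 / 4 * sinhcTerm x k := by
  have hratio : ((k : ℝ) + 1) ^ 2 / ((2 * k + 2) * (2 * k + 3)) ≤ 1 / 4 := by
    rw [div_le_div_iff₀ (by positivity) (by norm_num)]
    nlinarith
  calc ((k : ℝ) + 1) ^ 2 * sinhcTerm x (k + 1)
      = ((k : ℝ) + 1) ^ 2 / ((2 * k + 2) * (2 * k + 3)) * (x ^ 2 * sinhcTerm x k) := by
        rw [sinhcTerm_succ]; ring
    _ ≤ 1 / 4 * (x ^ 2 * sinhcTerm x k) := by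
        gcongr; exact mul_nonneg (sq_nonneg x) (sinhcTerm_nonneg x k)
    _ = x ^ 2 / 4 * sinhcTerm x k := by ring

theorem sum_sq_mul_sinhcTerm_le (x : ℝ) (n : ℕ) :
    ∑ k ∈ range n, (k : ℝ) ^ 2 * sinhcTerm x k ≤ x ^ 2 / 4 * ∑ k ∈ range n, sinhcTerm x k := by
  cases n with
  | zero => simp
  | succ n =>
    calc ∑ k ∈ range (n + 1), (k : ℝ) ^ 2 * sinhcTerm x k
        = ∑ k ∈ range n, ((k : ℝ) + 1) ^ 2 * sinhcTerm x (k + 1) := by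
          simp [sum_range_succ']
      _ ≤ ∑ k ∈ range n, x ^ 2 / 4 * sinhcTerm x k :=
          sum_le_sum fun k _ => sq_mul_sinhcTerm_succ_le x k
      _ ≤ x ^ 2 / 4 * ∑ k ∈ range (n + 1), sinhcTerm x k := by
          rw [← mul_sum, sum_range_succ, mul_add]
          exact le_add_of_nonneg_right (mul_nonneg (by positivity) (sinhcTerm_nonneg x n))

theorem weight_zero_mul_sum_le (m : ℕ) (x : ℝ) :
    (weight m 0 : ℝ) * (1 - x ^ 2 / (4 * (m + 1))) * ∑ k ∈ range (m + 1), sinhcTerm x k ≤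
      ∑ k ∈ range (m + 1), (weight m k : ℝ) * sinhcTerm x k := by
  have hloss := sum_sq_mul_sinhcTerm_le x (m + 1)
  have hw0 : (0 : ℝ) ≤ weight m 0 / (m + 1) := by positivity
  calc (weight m 0 : ℝ) * (1 - x ^ 2 / (4 * (m + 1))) * ∑ k ∈ range (m + 1), sinhcTerm x k
      = weight m 0 * ∑ k ∈ range (m + 1), sinhcTerm x k -
          weight m 0 / (m + 1) * (x ^ 2 / 4 * ∑ k ∈ range (m + 1), sinhcTerm x k) := by
        field_simp
    _ ≤ weight m 0 * ∑ k ∈ range (m + 1), sinhcTerm x k -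
          weight m 0 / (m + 1) * ∑ k ∈ range (m + 1), (k : ℝ) ^ 2 * sinhcTerm x k := by
        gcongr
    _ = ∑ k ∈ range (m + 1), (1 - (k : ℝ) ^ 2 / (m + 1)) * weight m 0 * sinhcTerm x k := by
        rw [mul_sum, mul_sum, ← sum_sub_distrib]
        refine sum_congr rfl fun k _ => ?_
        ring
    _ ≤ ∑ k ∈ range (m + 1), (weight m k : ℝ) * sinhcTerm x k := by
        refine sum_le_sum fun k hk => ?_
        gcongr
        · exact sinhcTerm_nonneg x k
        · exact weight_ge (by simpa [Nat.lt_succ_iff] using hk)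

theorem scaled_c_two_mul (m : ℕ) :
    (4 * Real.sqrt 6) ^ (2 * m) * c (2 * m) =
      ∑ k ∈ range (m + 1), (weight m k : ℝ) * sinhcTerm (π / 6) k := by
  rw [c, show (2 * m + 1) / 2 = m by omega, Even.neg_one_pow ⟨m, two_mul m⟩, ← mul_assoc,
    mul_one_div_cancel (by positivity), one_mul, ← sum_range_reflect]
  refine sum_congr rfl fun k hk => ?_
  have hk : k ≤ m := Nat.lt_succ_iff.mp (mem_range.mp hk)
  rw [show m + 1 - 1 - k = m - k by omega,
    show ((2 * m : ℕ) : ℤ) - 2 * ((m - k : ℕ) : ℤ) = ((2 * k : ℕ) : ℤ) by push_cast; omega,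
    zpow_natCast, show 2 * m + 1 - (m - k) = m + 1 + k by omega,
    show 2 * m + 1 - 2 * (m - k) = 2 * k + 1 by omega, weight, sinhcTerm]
  push_cast
  ring

end CoeffLowerBound

open CoeffLowerBound in
theorem stmt19 (m : ℕ) :
    (4 * Real.sqrt 6) ^ (2 * m) * c (2 * m) ≥
      6 / π * (2 * m + 1) * ((2 * m).choose m : ℝ) * (1 - π ^ 2 / 72 * (1 / (2 * m + 2))) *
        ∑ k ∈ Finset.range (m + 1), 1 / ((2 * k + 1).factorial : ℝ) * (π / 6) ^ (2 * k + 1) := by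
  have hsum : ∑ k ∈ range (m + 1), 1 / ((2 * k + 1).factorial : ℝ) * (π / 6) ^ (2 * k + 1) =
      π / 6 * ∑ k ∈ range (m + 1), sinhcTerm (π / 6) k := by
    rw [mul_sum]
    refine sum_congr rfl fun k _ => ?_
    rw [sinhcTerm, pow_succ]
    ring
  rw [ge_iff_le, scaled_c_two_mul, hsum]
  convert weight_zero_mul_sum_le m (π / 6) using 1
  rw [weight_zero]
  push_cast
  field_simp
  ring
end
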